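/- (Right-handed topological Ackermann lemma.) Let (X, K, R) be a generalized modal space and let p be a fixed propositional variable. Let θ be a formula of Form containing no propositional variables (built from nominals and ⊤ using ∧, ∨, □, ◆). Suppose given finitely many pairs (η_1, ι_1), …, (η_m, ι_m), where each pair is either of the form (α, q) with α ∈ Form and q a propositional variable distinct from p, or of the form (p, {n}ᶜ) for some point n ∈ X. Let V be a valuation assigning to every propositional variable an element of D_K(X) and to every nominal a singleton subset of X, where by convention V({n}ᶜ) := {n}ᶜ and V(q) is the D_K(X)-value of q. Then the following are equivalent: (1) V(η_i[θ/p]) ⊆ V(ι_i) for all 1 ≤ i ≤ m, where η_i[θ/p] denotes the result of substituting θ for every occurrence of p in η_i; (2) there exists Z ∈ D_K(X) with V(θ) ⊆ Z such that, for the valuation V' agreeing with V except that V'(p) = Z, one has V'(η_i) ⊆ V'(ι_i) for all 1 ≤ i ≤ m. -/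

import Mathlib

open Set TopologicalSpace

/-- A family of sets is downward-directed if any two members contain a common member. -/
def DirDown {X : Type*} (F : Set (Set X)) : Prop :=
  ∀ U ∈ F, ∀ V ∈ F, ∃ W ∈ F, W ⊆ U ∩ V

/-- A family of sets is upward-directed if any two members are contained in a common member. -/
def DirUp {X : Type*} (F : Set (Set X)) : Prop :=
  ∀ U ∈ F, ∀ V ∈ F, ∃ W ∈ F, U ∪ V ⊆ W

/-- `(X, K)` is a generalized Stone space. -/
structure IsGenStone {X : Type*} [TopologicalSpace X] (K : Set (Set X)) : Prop where
  sep : ∀ x y : X, x ≠ y → ∃ U ∈ K, x ∈ U ∧ y ∉ U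
  basis : IsTopologicalBasis K
  compact : ∀ U ∈ K, IsCompact U
  diff_mem : ∀ A ∈ K, ∀ B ∈ K, A ∩ Bᶜ ∈ K
  union_mem : ∀ A ∈ K, ∀ B ∈ K, A ∪ B ∈ K
  dir_inter : ∀ Y : Set X, IsClosed Y → ∀ I ⊆ K, I.Nonempty → DirDown I →
    (∀ U ∈ I, (Y ∩ U).Nonempty) → (Y ∩ ⋂₀ I).Nonempty

/-- The dual family `D_K(X)` of sets whose complement lies in `K`. -/
def DK {X : Type*} (K : Set (Set X)) : Set (Set X) := {U | Uᶜ ∈ K}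

/-- `(X, K, R)` is a generalized modal space. -/
structure IsGenModal {X : Type*} [TopologicalSpace X] (K : Set (Set X))
    (R : X → X → Prop) : Prop where
  toIsGenStone : IsGenStone K
  closed_succ : ∀ x : X, IsClosed {y | R x y}
  box_mem : ∀ U ∈ DK K, {x : X | ∀ y, R x y → y ∈ U} ∈ DK K

/-- Modal formulas built from propositional variables (`P`), nominals (`N`) and `⊤`,
using `∧`, `∨`, `□` and the backward diamond `◆`. -/
inductive Form (P N : Type*) : Type _ where
  | prop : P → Form P N
  | nom : N → Form P N
  | top : Form P N
  | and : Form P N → Form P N → Form P N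
  | or : Form P N → Form P N → Form P N
  | box : Form P N → Form P N
  | bdia : Form P N → Form P N

/-- The truth set of a formula in a model `(X, R, V)`, where `Vp` interprets propositional
variables and `Vn` interprets nominals. -/
def tset {X P N : Type*} (R : X → X → Prop) (Vp : P → Set X) (Vn : N → Set X) :
    Form P N → Set X
  | Form.prop p => Vp p
  | Form.nom n => Vn n
  | Form.top => Set.univ
  | Form.and a b => tset R Vp Vn a ∩ tset R Vp Vn b
  | Form.or a b => tset R Vp Vn a ∪ tset R Vp Vn b
  | Form.box a => {x | ∀ y, R x y → y ∈ tset R Vp Vn a}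
  | Form.bdia a => {x | ∃ y, R y x ∧ y ∈ tset R Vp Vn a}

/-- A formula contains no propositional variables (it is built from nominals and `⊤`
using `∧`, `∨`, `□`, `◆`). -/
def NoProp {P N : Type*} : Form P N → Prop
  | Form.prop _ => False
  | Form.nom _ => True
  | Form.top => True
  | Form.and a b => NoProp a ∧ NoProp b
  | Form.or a b => NoProp a ∧ NoProp b
  | Form.box a => NoProp a
  | Form.bdia a => NoProp a

/-- Substitution of the formula `θ` for every occurrence of the propositional variable `p`. -/
def subst {P N : Type*} [DecidableEq P] (p : P) (θ : Form P N) : Form P N → Form P N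
  | Form.prop q => if q = p then θ else Form.prop q
  | Form.nom n => Form.nom n
  | Form.top => Form.top
  | Form.and a b => Form.and (subst p θ a) (subst p θ b)
  | Form.or a b => Form.or (subst p θ a) (subst p θ b)
  | Form.box a => Form.box (subst p θ a)
  | Form.bdia a => Form.bdia (subst p θ a)

/-!
The truth sets of all formulas under a valuation by closed sets are closed, and, as
functions of the value `Z` of `p`, they are monotone and commute with intersections of
downward-directed families of closed sets (an Esakia-type lemma; the `◆` case uses that
`R⁻¹(x)` is compact). Since `D_K(X)`-sets have compact complements, an inequality
`α[C/p] ≤ W` with `C` closed and `W ∈ D_K(X)` therefore already holds with `C` replaced by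
some `Z ∈ D_K(X)` containing `C`: the closed set `C` is the directed intersection of such `Z`.
Apply this with `C = V(θ)`, which is closed because nominals denote points, and intersect
the finitely many `Z` obtained.
-/

open Function

lemma IsCompact.inter_iInter_nonempty_of_directed {X ι : Type*} [TopologicalSpace X]
    [Nonempty ι] {S : Set X} (hS : IsCompact S) {t : ι → Set X}
    (htd : Directed (· ⊇ ·) t) (htc : ∀ i, IsClosed (t i))
    (htn : ∀ i, (S ∩ t i).Nonempty) : (S ∩ ⋂ i, t i).Nonempty := by
  rw [nonempty_iff_ne_empty]
  intro h
  obtain ⟨i, hi⟩ := hS.elim_directed_family_closed t htc h htd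
  exact (htn i).ne_empty hi

lemma univ_mem_DK {X : Type*} {K : Set (Set X)} (h0 : (∅ : Set X) ∈ K) :
    (univ : Set X) ∈ DK K := by
  show univᶜ ∈ K
  rwa [compl_univ]

lemma compl_mem_DK {X : Type*} {K : Set (Set X)} {A : Set X} (hA : A ∈ K) : Aᶜ ∈ DK K :=
  show Aᶜᶜ ∈ K by rwa [compl_compl]

namespace IsGenStone

variable {X : Type*} [TopologicalSpace X] {K : Set (Set X)} (hK : IsGenStone K)
include hK

lemma isOpen_of_mem {A : Set X} (hA : A ∈ K) : IsOpen A :=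
  hK.basis.isOpen hA

lemma exists_mem (x : X) : ∃ A ∈ K, x ∈ A :=
  let ⟨A, hA, hxA, _⟩ := hK.basis.exists_subset_of_mem_open (mem_univ x) isOpen_univ
  ⟨A, hA, hxA⟩

lemma empty_mem {A : Set X} (hA : A ∈ K) : (∅ : Set X) ∈ K := by
  simpa using hK.diff_mem A hA A hA

lemma t2Space : T2Space X := by
  refine ⟨fun x y hxy => ?_⟩
  obtain ⟨U, hU, hxU, hyU⟩ := hK.sep x y hxy
  obtain ⟨A, hA, hyA⟩ := hK.exists_mem y
  exact ⟨U, A ∩ Uᶜ, hK.isOpen_of_mem hU, hK.isOpen_of_mem (hK.diff_mem A hA U hU), hxU,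
    ⟨hyA, hyU⟩, disjoint_compl_right.mono_right inter_subset_right⟩

lemma isClosed_of_mem {A : Set X} (hA : A ∈ K) : IsClosed A :=
  haveI := hK.t2Space
  (hK.compact A hA).isClosed

lemma isClosed_of_mem_DK {Z : Set X} (hZ : Z ∈ DK K) : IsClosed Z :=
  isOpen_compl_iff.1 (hK.isOpen_of_mem hZ)

lemma infClosed_DK : InfClosed (DK K) := fun Z hZ W hW => by
  show (Z ∩ W)ᶜ ∈ K
  rw [compl_inter]
  exact hK.union_mem _ hZ _ hW

lemma exists_mem_DK_of_isClosed {C : Set X} (hC : IsClosed C) {x : X} (hx : x ∉ C) :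
    ∃ Z ∈ DK K, C ⊆ Z ∧ x ∉ Z := by
  obtain ⟨A, hA, hxA, hAC⟩ := hK.basis.exists_subset_of_mem_open hx hC.isOpen_compl
  exact ⟨Aᶜ, compl_mem_DK hA, subset_compl_comm.1 hAC, not_not_intro hxA⟩

lemma subset_compl_singleton_iff_exists_mem_DK {C : Set X} (hC : IsClosed C) (x : X) :
    C ⊆ {x}ᶜ ↔ ∃ Z ∈ DK K, C ⊆ Z ∧ Z ⊆ {x}ᶜ := by
  refine ⟨fun h => ?_, fun ⟨Z, _, hCZ, hZ⟩ => hCZ.trans hZ⟩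
  obtain ⟨Z, hZ, hCZ, hxZ⟩ := hK.exists_mem_DK_of_isClosed hC (fun hx => h hx rfl)
  exact ⟨Z, hZ, hCZ, fun z hz (hzx : z = x) => hxZ (hzx ▸ hz)⟩

lemma forall_exists_mem_DK_iff (h0 : (∅ : Set X) ∈ K) {ι : Type*} [Finite ι] {C : Set X}
    {Q : ι → Set X → Prop} (hQ : ∀ i ⦃Z Z' : Set X⦄, Z' ⊆ Z → Q i Z → Q i Z') :
    (∀ i, ∃ Z ∈ DK K, C ⊆ Z ∧ Q i Z) ↔ ∃ Z ∈ DK K, C ⊆ Z ∧ ∀ i, Q i Z := by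
  refine ⟨fun h => ?_, fun ⟨Z, hZ, hCZ, hQZ⟩ i => ⟨Z, hZ, hCZ, hQZ i⟩⟩
  choose Z hZ hCZ hQZ using h
  exact ⟨⋂ i, Z i, hK.infClosed_DK.iInf_mem (univ_mem_DK h0) hZ, subset_iInter hCZ,
    fun i => hQ i (iInter_subset Z i) (hQZ i)⟩

end IsGenStone

namespace IsGenModal

variable {X : Type*} [TopologicalSpace X] {K : Set (Set X)} {R : X → X → Prop}
  (hM : IsGenModal K R)
include hM

lemma diamond_mem {A : Set X} (hA : A ∈ K) : {y | ∃ w, R y w ∧ w ∈ A} ∈ K := by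
  have h : {x | ∀ y, R x y → y ∈ Aᶜ}ᶜ ∈ K := hM.box_mem Aᶜ (compl_mem_DK hA)
  convert h using 1
  ext y
  simp

lemma rel_of_forall_diamond {x y : X} (h : ∀ A ∈ K, x ∈ A → ∃ w, R y w ∧ w ∈ A) :
    R y x := by
  have hx : x ∈ closure {w | R y w} :=
    hM.toIsGenStone.basis.mem_closure_iff.2 fun A hA hxA =>
      let ⟨w, hw, hwA⟩ := h A hA hxA
      ⟨w, hwA, hw⟩
  exact (hM.closed_succ y).closure_subset hx

lemma isClosed_setOf_rel (x : X) : IsClosed {y | R y x} :=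
  isClosed_of_closure_subset fun _ hy => hM.rel_of_forall_diamond fun A hA hxA =>
    closure_minimal (t := {y | ∃ w, R y w ∧ w ∈ A}) (fun _ hz => ⟨x, hz, hxA⟩)
      (hM.toIsGenStone.isClosed_of_mem (hM.diamond_mem hA)) hy

lemma isCompact_setOf_rel (x : X) : IsCompact {y | R y x} := by
  obtain ⟨A, hA, hxA⟩ := hM.toIsGenStone.exists_mem x
  exact (hM.toIsGenStone.compact _ (hM.diamond_mem hA)).of_isClosed_subset
    (hM.isClosed_setOf_rel x) fun _ hy => ⟨x, hy, hxA⟩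

lemma isClosed_box {A : Set X} (hA : IsClosed A) : IsClosed {x | ∀ y, R x y → y ∈ A} := by
  refine isClosed_of_closure_subset fun x hx y hxy => by_contra fun hy => ?_
  obtain ⟨Z, hZ, hAZ, hyZ⟩ := hM.toIsGenStone.exists_mem_DK_of_isClosed hA hy
  exact hyZ (closure_minimal (fun _ (hx' : ∀ y, _ → y ∈ A) y' h => hAZ (hx' y' h))
    (hM.toIsGenStone.isClosed_of_mem_DK (hM.box_mem Z hZ)) hx y hxy)

lemma isClosed_bdia {A : Set X} (hA : IsClosed A) : IsClosed {x | ∃ y, R y x ∧ y ∈ A} := by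
  have hK := hM.toIsGenStone
  refine isClosed_of_closure_subset fun x hx => ?_
  let diamond : Set X → Set X := fun B => {y | ∃ w, R y w ∧ w ∈ B}
  let N := {B | B ∈ K ∧ x ∈ B}
  have hdir : DirDown (diamond '' N) := by
    rintro _ ⟨B₁, ⟨hB₁, hx₁⟩, rfl⟩ _ ⟨B₂, ⟨hB₂, hx₂⟩, rfl⟩
    obtain ⟨B, hB, hxB, hBsub⟩ := hK.basis.exists_subset_of_mem_open (mem_inter hx₁ hx₂)
      ((hK.isOpen_of_mem hB₁).inter (hK.isOpen_of_mem hB₂))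
    exact ⟨diamond B, ⟨B, ⟨hB, hxB⟩, rfl⟩, fun y ⟨w, hyw, hwB⟩ =>
      ⟨⟨w, hyw, (hBsub hwB).1⟩, ⟨w, hyw, (hBsub hwB).2⟩⟩⟩
  have hmeet : ∀ U ∈ diamond '' N, (A ∩ U).Nonempty := by
    rintro _ ⟨B, ⟨hB, hxB⟩, rfl⟩
    obtain ⟨z, hzB, y, hyz, hyA⟩ := hK.basis.mem_closure_iff.1 hx B hB hxB
    exact ⟨y, hyA, z, hyz, hzB⟩
  obtain ⟨y, hyA, hy⟩ := hK.dir_inter A hA (diamond '' N)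
    (image_subset_iff.2 fun B hB => hM.diamond_mem hB.1)
    (let ⟨B, hB, hxB⟩ := hK.exists_mem x; ⟨diamond B, B, ⟨hB, hxB⟩, rfl⟩) hdir hmeet
  exact ⟨y, hM.rel_of_forall_diamond fun B hB hxB => hy _ ⟨B, ⟨hB, hxB⟩, rfl⟩, hyA⟩

end IsGenModal

section Formula

variable {X P N : Type*} (R : X → X → Prop) (Vn : N → Set X)

lemma monotone_tset (a : Form P N) : Monotone fun Vp : P → Set X => tset R Vp Vn a := by
  intro Vp Vp' h
  induction a with
  | prop q => exact h q
  | nom n => exact subset_rfl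
  | top => exact subset_rfl
  | and a b iha ihb => exact inter_subset_inter iha ihb
  | or a b iha ihb => exact union_subset_union iha ihb
  | box a ih => exact fun x hx y hxy => ih (hx y hxy)
  | bdia a ih => exact fun x ⟨y, hyx, hy⟩ => ⟨y, hyx, ih hy⟩

variable [DecidableEq P]

lemma monotone_tset_update (Vp : P → Set X) (p : P) (a : Form P N) :
    Monotone fun Z => tset R (update Vp p Z) Vn a :=
  (monotone_tset R Vn a).comp update_mono

lemma tset_subst (Vp : P → Set X) (p : P) (θ a : Form P N) :
    tset R Vp Vn (subst p θ a) = tset R (update Vp p (tset R Vp Vn θ)) Vn a := by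
  induction a with
  | prop q =>
    rcases eq_or_ne q p with rfl | hne
    · simp [subst, tset]
    · simp [subst, tset, hne]
  | nom n => rfl
  | top => rfl
  | and a b iha ihb => simp only [subst, tset, iha, ihb]
  | or a b iha ihb => simp only [subst, tset, iha, ihb]
  | box a ih => simp only [subst, tset, ih]
  | bdia a ih => simp only [subst, tset, ih]

end Formula

namespace IsGenModal

variable {X P N : Type*} [TopologicalSpace X] {K : Set (Set X)} {R : X → X → Prop}
  (hM : IsGenModal K R) {Vp : P → Set X} {Vn : N → Set X}
  (hVp : ∀ q, IsClosed (Vp q)) (hVn : ∀ n, IsClosed (Vn n))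
include hM hVp hVn

lemma isClosed_tset (a : Form P N) : IsClosed (tset R Vp Vn a) := by
  induction a with
  | prop q => exact hVp q
  | nom n => exact hVn n
  | top => exact isClosed_univ
  | and a b iha ihb => exact iha.inter ihb
  | or a b iha ihb => exact iha.union ihb
  | box a ih => exact hM.isClosed_box ih
  | bdia a ih => exact hM.isClosed_bdia ih

variable [DecidableEq P] (p : P)

lemma isClosed_tset_update {Z : Set X} (hZ : IsClosed Z) (a : Form P N) :
    IsClosed (tset R (update Vp p Z) Vn a) :=
  hM.isClosed_tset ((forall_update_iff Vp fun _ s => IsClosed s).2 ⟨hZ, fun q _ => hVp q⟩) hVn a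

lemma iInter_tset_update_subset {ι : Type*} [Nonempty ι] {F : ι → Set X}
    (hFd : Directed (· ⊇ ·) F) (hFc : ∀ i, IsClosed (F i)) (a : Form P N) :
    ⋂ i, tset R (update Vp p (F i)) Vn a ⊆ tset R (update Vp p (⋂ i, F i)) Vn a := by
  induction a with
  | prop q =>
    rcases eq_or_ne q p with rfl | hne
    · simp [tset]
    · simp [tset, update_of_ne hne, iInter_const]
  | nom n => simp [tset, iInter_const]
  | top => simp [tset]
  | and a b iha ihb =>
    simp only [tset, iInter_inter_distrib]
    exact inter_subset_inter iha ihb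
  | or a b iha ihb =>
    intro x hx
    simp only [tset, mem_iInter, mem_union] at hx ⊢
    by_cases ha : ∀ i, x ∈ tset R (update Vp p (F i)) Vn a
    · exact Or.inl (iha (mem_iInter.2 ha))
    obtain ⟨i, hi⟩ := not_forall.1 ha
    refine Or.inr (ihb (mem_iInter.2 fun j => ?_))
    obtain ⟨k, hki, hkj⟩ := hFd i j
    exact (hx k).elim (fun h => absurd (monotone_tset_update R Vn Vp p a hki h) hi)
      (monotone_tset_update R Vn Vp p b hkj ·)
  | box a ih =>
    intro x hx y hxy
    exact ih (mem_iInter.2 fun i => mem_iInter.1 hx i y hxy)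
  | bdia a ih =>
    intro x hx
    obtain ⟨y, hyx, hy⟩ := (hM.isCompact_setOf_rel x).inter_iInter_nonempty_of_directed
      (hFd.mono_comp _ fun _ _ h => monotone_tset_update R Vn Vp p a h)
      (fun i => hM.isClosed_tset_update hVp hVn p (hFc i) a)
      (fun i => let ⟨y, hyx, hy⟩ := mem_iInter.1 hx i; ⟨y, hyx, hy⟩)
    exact ⟨y, hyx, ih hy⟩

lemma tset_update_subset_iff {C W : Set X} (hC : IsClosed C) (hW : W ∈ DK K)
    (a : Form P N) : tset R (update Vp p C) Vn a ⊆ W ↔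
      ∃ Z ∈ DK K, C ⊆ Z ∧ tset R (update Vp p Z) Vn a ⊆ W := by
  refine ⟨fun h => ?_, fun ⟨Z, _, hCZ, hZ⟩ =>
    (monotone_tset_update R Vn Vp p a hCZ).trans hZ⟩
  have hK := hM.toIsGenStone
  let ι := {Z // Z ∈ DK K ∧ C ⊆ Z}
  have : Nonempty ι := ⟨⟨univ, univ_mem_DK (hK.empty_mem hW), subset_univ C⟩⟩
  have hdir : Directed (· ⊇ ·) fun Z : ι => Z.1 := fun Z Z' =>
    ⟨⟨Z.1 ∩ Z'.1, hK.infClosed_DK Z.2.1 Z'.2.1, subset_inter Z.2.2 Z'.2.2⟩,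
      inter_subset_left, inter_subset_right⟩
  have hsub : ⋂ Z : ι, Z.1 ⊆ C := fun x hx => by_contra fun hxC =>
    let ⟨Z, hZ, hCZ, hxZ⟩ := hK.exists_mem_DK_of_isClosed hC hxC
    hxZ (mem_iInter.1 hx ⟨Z, hZ, hCZ⟩)
  by_contra! hne
  obtain ⟨x, hxW, hx⟩ := (hK.compact _ hW).inter_iInter_nonempty_of_directed
    (hdir.mono_comp _ fun _ _ h => monotone_tset_update R Vn Vp p a h)
    (fun Z => hM.isClosed_tset_update hVp hVn p (hK.isClosed_of_mem_DK Z.2.1) a)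
    (fun Z => let ⟨x, hx, hxW⟩ := not_subset.1 (hne Z.1 Z.2.1 Z.2.2); ⟨x, hxW, hx⟩)
  exact hxW (h (monotone_tset_update R Vn Vp p a hsub (hM.iInter_tset_update_subset hVp hVn p
    hdir (fun Z => hK.isClosed_of_mem_DK Z.2.1) a hx)))

end IsGenModal

/-- Each inequality `η_i ≤ ι_i` is coded by an element of `(Form P N × P) ⊕ X`:
`Sum.inl (α, q)` codes `α ≤ q`, and `Sum.inr n` codes `p ≤ {n}ᶜ`. -/
theorem stmt18 {X P N : Type*} [TopologicalSpace X] [DecidableEq P]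
    {K : Set (Set X)} {R : X → X → Prop} (hX : IsGenModal K R)
    (p : P) (θ : Form P N)
    (m : ℕ) (ineq : Fin m → (Form P N × P) ⊕ X)
    (hq : ∀ (i : Fin m) (a : Form P N) (q : P), ineq i = Sum.inl (a, q) → q ≠ p)
    (Vp : P → Set X) (Vn : N → Set X)
    (hVp : ∀ q : P, Vp q ∈ DK K) (hVn : ∀ n, ∃ x : X, Vn n = {x}) :
    (∀ i : Fin m, match ineq i with
      | Sum.inl (a, q) => tset R Vp Vn (subst p θ a) ⊆ Vp q
      | Sum.inr n => tset R Vp Vn θ ⊆ ({n}ᶜ : Set X)) ↔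
    (∃ Z ∈ DK K, tset R Vp Vn θ ⊆ Z ∧
      ∀ i : Fin m, match ineq i with
      | Sum.inl (a, q) =>
          tset R (Function.update Vp p Z) Vn a ⊆ Function.update Vp p Z q
      | Sum.inr n => Z ⊆ ({n}ᶜ : Set X)) := by
  have hK := hX.toIsGenStone
  have := hK.t2Space
  have hVpc : ∀ q, IsClosed (Vp q) := fun q => hK.isClosed_of_mem_DK (hVp q)
  have hVnc : ∀ n, IsClosed (Vn n) := fun n => (hVn n).elim fun x hx => hx ▸ isClosed_singleton
  have hC : IsClosed (tset R Vp Vn θ) := hX.isClosed_tset hVpc hVnc θ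
  refine (forall_congr' fun i => ?_).trans (hK.forall_exists_mem_DK_iff (hK.empty_mem (hVp p))
    fun i Z Z' hZ' => ?_)
  · rcases h : ineq i with ⟨a, q⟩ | n
    · simp only [update_of_ne (hq i a q h), tset_subst]
      exact hX.tset_update_subset_iff hVpc hVnc p hC (hVp q) a
    · exact hK.subset_compl_singleton_iff_exists_mem_DK hC n
  · rcases h : ineq i with ⟨a, q⟩ | n
    · simp only [update_of_ne (hq i a q h)]
      exact (monotone_tset_update R Vn Vp p a hZ').trans
    · exact hZ'.trans
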